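/- arXiv:2508.16468 — 12 statements merged into one kernel-verified Lean document; each statement's English description precedes it below -/
import Mathlib

section
/- Let X be a real Hilbert space and f : X → ℝ be continuously Fréchet differentiable with gradient ∇f : X → X. Let x, y ∈ X, let H(x) : X → X be a continuous linear operator assigned to x (and more generally to each point of the segment), and suppose that for all points x̃, ỹ on the segment [x, y] = {t·x + (1−t)·y : t ∈ [0,1]} one has ‖∇f(ỹ) − ∇f(x̃) − H(x̃)(ỹ − x̃)‖ ≤ L‖x̃ − ỹ‖, where L ≥ 0. Then |f(y) − f(x) − ⟪∇f(x), y − x⟫ − (1/2)⟪H(x)(y − x), y − x⟫| ≤ (L/2)‖x − y‖². -/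
open scoped RealInnerProductSpace
open intervalIntegral in
/-- Lemma 2.3: quadratic model error bound when the main regularity inequality holds on the
segment `[x, y]`. -/
theorem stmt_2 {X : Type*} [NormedAddCommGroup X] [InnerProductSpace ℝ X] [CompleteSpace X]
    (f : X → ℝ) (G : X → X) (hf : ∀ z : X, HasGradientAt f (G z) z) (hG : Continuous G)
    (H : X → X →L[ℝ] X) (L : ℝ) (hL : 0 ≤ L) (x y : X)
    (hseg : ∀ xt ∈ segment ℝ x y, ∀ yt ∈ segment ℝ x y,
      ‖G yt - G xt - H xt (yt - xt)‖ ≤ L * ‖xt - yt‖) :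
    |f y - f x - ⟪G x, y - x⟫ - (1 / 2) * ⟪H x (y - x), y - x⟫| ≤ (L / 2) * ‖x - y‖ ^ 2 := by
  set v := y - x with hv
  set c : ℝ → X := fun t => x + t • v with hc
  have hcont : Continuous c := by fun_prop
  have hcdiff : ∀ t : ℝ, HasDerivAt c v t := by
    intro t
    simpa [hc] using ((hasDerivAt_id t).smul_const v).const_add x
  set φ : ℝ → ℝ := fun t => ⟪G (c t), v⟫ with hφ
  have hφcont : Continuous φ := (hG.comp hcont).inner continuous_const
  have hderiv : ∀ t : ℝ, HasDerivAt (fun s => f (c s)) (φ t) t := by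
    intro t
    have h1 := (hf (c t)).hasFDerivAt
    have := h1.comp_hasDerivAt t (hcdiff t)
    exact this
  have hc0 : c 0 = x := by simp [hc]
  have hc1 : c 1 = y := by simp [hc, hv]
  have hint : f y - f x = ∫ t in (0:ℝ)..1, φ t := by
    rw [intervalIntegral.integral_eq_sub_of_hasDerivAt (fun t _ => hderiv t)
      (hφcont.intervalIntegrable 0 1), hc0, hc1]
  set ψ : ℝ → ℝ := fun t => φ t - ⟪G x, v⟫ - t * ⟪H x v, v⟫ with hψ
  have hψcont : Continuous ψ := by fun_prop
  have key : f y - f x - ⟪G x, v⟫ - (1 / 2) * ⟪H x v, v⟫ = ∫ t in (0:ℝ)..1, ψ t := by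
    rw [hψ]
    have i1 : IntervalIntegrable (fun t : ℝ => φ t - ⟪G x, v⟫) MeasureTheory.volume 0 1 :=
      Continuous.intervalIntegrable (by fun_prop) 0 1
    have i2 : IntervalIntegrable (fun t : ℝ => t * ⟪H x v, v⟫) MeasureTheory.volume 0 1 :=
      Continuous.intervalIntegrable (by fun_prop) 0 1
    rw [intervalIntegral.integral_sub i1 i2,
      intervalIntegral.integral_sub (hφcont.intervalIntegrable 0 1)
        (continuous_const.intervalIntegrable 0 1),
      intervalIntegral.integral_const, intervalIntegral.integral_mul_const,
      integral_id, ← hint]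
    simp only [smul_eq_mul]
    ring
  have hbound : ∀ t ∈ Set.Icc (0:ℝ) 1, |ψ t| ≤ L * ‖x - y‖ ^ 2 * t := by
    intro t ht
    have hmem : c t ∈ segment ℝ x y := by
      rw [segment_eq_image']
      exact ⟨t, ht, rfl⟩
    have hx : x ∈ segment ℝ x y := left_mem_segment ℝ x y
    have h1 := hseg x hx (c t) hmem
    have hct : c t - x = t • v := by simp [hc]
    have hxc : ‖x - c t‖ = t * ‖v‖ := by
      rw [show x - c t = -(t • v) by simp [hc], norm_neg, norm_smul,
        Real.norm_eq_abs, abs_of_nonneg ht.1]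
    have hψt : ψ t = ⟪G (c t) - G x - H x (c t - x), v⟫ := by
      simp [hψ, hφ, hct, inner_sub_left, inner_smul_left, real_inner_smul_left]
    rw [hψt]
    calc |⟪G (c t) - G x - H x (c t - x), v⟫|
        ≤ ‖G (c t) - G x - H x (c t - x)‖ * ‖v‖ := abs_real_inner_le_norm _ _
      _ ≤ (L * ‖x - c t‖) * ‖v‖ := by
          gcongr
      _ = L * ‖x - y‖ ^ 2 * t := by
          rw [hxc]
          have : ‖v‖ = ‖x - y‖ := by rw [hv, ← norm_neg]; congr 1; abel
          rw [this]; ring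
  have habs : |∫ t in (0:ℝ)..1, ψ t| ≤ ∫ t in (0:ℝ)..1, |ψ t| :=
    intervalIntegral.abs_integral_le_integral_abs zero_le_one
  have hmono : (∫ t in (0:ℝ)..1, |ψ t|) ≤ ∫ t in (0:ℝ)..1, L * ‖x - y‖ ^ 2 * t := by
    apply intervalIntegral.integral_mono_on zero_le_one
      (hψcont.abs.intervalIntegrable 0 1)
      (Continuous.intervalIntegrable (by fun_prop) 0 1) hbound
  have hfin : (∫ t in (0:ℝ)..1, L * ‖x - y‖ ^ 2 * t) = (L / 2) * ‖x - y‖ ^ 2 := by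
    rw [intervalIntegral.integral_const_mul, integral_id]
    ring
  rw [key]
  calc |∫ t in (0:ℝ)..1, ψ t| ≤ ∫ t in (0:ℝ)..1, |ψ t| := habs
    _ ≤ ∫ t in (0:ℝ)..1, L * ‖x - y‖ ^ 2 * t := hmono
    _ = (L / 2) * ‖x - y‖ ^ 2 := hfin
end

section
/- Let X be a real Hilbert space, ψ : X → ℝ a convex function, f : X → ℝ differentiable at x with gradient ∇f(x) ∈ X, and H(x) : X → X a continuous linear operator satisfying ⟪H(x)d, d⟫ ≥ μ‖d‖² for all d ∈ X, where μ ∈ ℝ. Let λ ∈ ℝ with λ + μ > 0. Suppose x₊ ∈ X and g₊ ∈ X satisfy: (a) the subgradient inequality ψ(y) ≥ ψ(x₊) + ⟪g₊, y − x₊⟫ for all y ∈ X, and (b) the first-order condition g₊ = −∇f(x) − H(x)(x₊ − x) − λ(x₊ − x). Suppose also gₓ ∈ X satisfies ψ(y) ≥ ψ(x) + ⟪gₓ, y − x⟫ for all y ∈ X. Then ‖x₊ − x‖ ≤ ‖∇f(x) + gₓ‖ / (λ + μ). -/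
open scoped RealInnerProductSpace

/-- Lemma 2.4: the length of the regularized proximal Newton step is bounded by the subgradient
norm divided by `λ + μ`. -/
theorem stmt_3 {X : Type*} [NormedAddCommGroup X] [InnerProductSpace ℝ X] [CompleteSpace X]
    (ψ : X → ℝ) (hψ : ConvexOn ℝ Set.univ ψ)
    (f : X → ℝ) (x : X) (gradf : X) (hf : HasGradientAt f gradf x)
    (H : X →L[ℝ] X) (μ : ℝ) (hH : ∀ d : X, μ * ‖d‖ ^ 2 ≤ ⟪H d, d⟫)
    (lam : ℝ) (hlam : 0 < lam + μ)
    (xp gp gx : X)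
    (hsubp : ∀ y : X, ψ xp + ⟪gp, y - xp⟫ ≤ ψ y)
    (hfo : gp = -gradf - H (xp - x) - lam • (xp - x))
    (hsubx : ∀ y : X, ψ x + ⟪gx, y - x⟫ ≤ ψ y) :
    ‖xp - x‖ ≤ ‖gradf + gx‖ / (lam + μ) := by
  set d := xp - x with hd
  have h1 := hsubp x
  have h2 := hsubx xp
  have hmono : ⟪gx, d⟫ ≤ ⟪gp, d⟫ := by
    have e1 : ⟪gp, x - xp⟫ = -⟪gp, d⟫ := by
      rw [show (x - xp : X) = -(xp - x) from by abel, inner_neg_right, ← hd]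
    have e2 : (xp - x : X) = d := hd.symm
    rw [e1] at h1
    rw [e2] at h2
    linarith
  have hgp : ⟪gp, d⟫ = -⟪gradf, d⟫ - ⟪H d, d⟫ - lam * ‖d‖ ^ 2 := by
    rw [hfo]
    simp [inner_sub_left, inner_neg_left, real_inner_smul_left,
      real_inner_self_eq_norm_sq]
  have hcs : -⟪gradf + gx, d⟫ ≤ ‖gradf + gx‖ * ‖d‖ := by
    have := abs_real_inner_le_norm (gradf + gx) d
    have := neg_abs_le ⟪gradf + gx, d⟫
    linarith
  have hquad : (lam + μ) * ‖d‖ ^ 2 ≤ ‖gradf + gx‖ * ‖d‖ := by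
    have hH' := hH d
    have : ⟪gradf + gx, d⟫ ≤ -(lam + μ) * ‖d‖ ^ 2 := by
      rw [inner_add_left]
      nlinarith
    nlinarith
  rcases eq_or_ne d 0 with h0 | h0
  · rw [h0]
    simp
    positivity
  · have hdpos : 0 < ‖d‖ := norm_pos_iff.mpr h0
    rw [le_div_iff₀ hlam]
    nlinarith
end

section
/- Let X be a real Hilbert space, ψ : X → ℝ a convex function, x ∈ X, v ∈ X (playing the role of ∇f(x)), and H : X → X a continuous linear operator with ⟪H d, d⟫ ≥ 0 for all d ∈ X. Let 0 < λ ≤ λ′ be reals. Suppose y₁, y₂ ∈ X and g₁, g₂ ∈ X satisfy the subgradient inequalities ψ(y) ≥ ψ(y₁) + ⟪g₁, y − y₁⟫ and ψ(y) ≥ ψ(y₂) + ⟪g₂, y − y₂⟫ for all y ∈ X, together with the first-order conditions g₁ = −v − H(y₁ − x) − λ(y₁ − x) and g₂ = −v − H(y₂ − x) − λ′(y₂ − x). Then ‖y₁ − y₂‖ ≤ ((λ′ − λ)/λ′)·‖x − y₁‖. -/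
open scoped RealInnerProductSpace

/-- Lemma 2.5: sensitivity of the regularized proximal Newton step with respect to the
regularization parameter. -/
theorem stmt_4 {X : Type*} [NormedAddCommGroup X] [InnerProductSpace ℝ X] [CompleteSpace X]
    (ψ : X → ℝ) (hψ : ConvexOn ℝ Set.univ ψ)
    (x v : X) (H : X →L[ℝ] X) (hH : ∀ d : X, 0 ≤ ⟪H d, d⟫)
    (lam lam' : ℝ) (hlam : 0 < lam) (hle : lam ≤ lam')
    (y₁ y₂ g₁ g₂ : X)
    (hs1 : ∀ y : X, ψ y₁ + ⟪g₁, y - y₁⟫ ≤ ψ y)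
    (hs2 : ∀ y : X, ψ y₂ + ⟪g₂, y - y₂⟫ ≤ ψ y)
    (hfo1 : g₁ = -v - H (y₁ - x) - lam • (y₁ - x))
    (hfo2 : g₂ = -v - H (y₂ - x) - lam' • (y₂ - x)) :
    ‖y₁ - y₂‖ ≤ ((lam' - lam) / lam') * ‖x - y₁‖ := by
  have hlam' : 0 < lam' := lt_of_lt_of_le hlam hle
  set d := y₁ - y₂ with hd
  set a := y₁ - x with ha
  set b := y₂ - x with hb
  -- monotonicity of subgradients
  have hmono : 0 ≤ ⟪g₁ - g₂, d⟫ := by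
    have h1 := hs1 y₂
    have h2 := hs2 y₁
    have e1 : ⟪g₁, y₂ - y₁⟫ = -⟪g₁, d⟫ := by
      rw [hd, ← inner_neg_right, neg_sub]
    rw [inner_sub_left]
    have : (y₁ - y₂) = d := rfl
    rw [hd] at *
    linarith [h1, h2, e1]
  -- expand g₁ - g₂
  have hgd : g₁ - g₂ = -(H d) - lam • a + lam' • b := by
    rw [hfo1, hfo2, hd, ha, hb]
    simp only [map_sub]
    abel
  have hexp : ⟪g₁ - g₂, d⟫ = -⟪H d, d⟫ - lam * ⟪a, d⟫ + lam' * ⟪b, d⟫ := by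
    rw [hgd, inner_add_left, inner_sub_left, inner_neg_left, real_inner_smul_left,
      real_inner_smul_left]
  have hbd : ⟪b, d⟫ = ⟪a, d⟫ - ‖d‖ ^ 2 := by
    have : b = a - d := by rw [ha, hb, hd]; abel
    rw [this, inner_sub_left, real_inner_self_eq_norm_sq]
  have hkey : lam' * ‖d‖ ^ 2 ≤ (lam' - lam) * ⟪a, d⟫ := by
    have hHd := hH d
    rw [hexp, hbd] at hmono
    nlinarith
  have hcs : ⟪a, d⟫ ≤ ‖a‖ * ‖d‖ := real_inner_le_norm a d
  have hna : ‖a‖ = ‖x - y₁‖ := by rw [ha, norm_sub_rev]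
  rw [div_mul_eq_mul_div, le_div_iff₀ hlam']
  rcases (norm_nonneg d).eq_or_lt' with h | h
  · rw [h, zero_mul]
    exact mul_nonneg (sub_nonneg.2 hle) (norm_nonneg _)
  · rw [← hna]
    nlinarith [mul_le_mul_of_nonneg_left hcs (sub_nonneg.mpr hle)]
end

section
/- Let X be a real Hilbert space, L ≥ 0, and λ > 0 with λ ≥ L. Let x, x₊ ∈ X, ∇f(x), ∇f(x₊) ∈ X, and H(x) : X → X a continuous linear operator, and suppose ‖∇f(x₊) − ∇f(x) − H(x)(x₊ − x)‖ ≤ L‖x − x₊‖. Define u := ∇f(x₊) − ∇f(x) − H(x)(x₊ − x) − λ(x₊ − x). Then ⟪u, x − x₊⟫ ≥ (1/(2λ))‖u‖², i.e., the first acceptance condition of the algorithm holds (with any α ≤ 1/2). -/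
open scoped RealInnerProductSpace

/-- First part of Lemma 3.1: once `λ ≥ L`, the first acceptance condition (with `α ≤ 1/2`)
holds. -/
theorem stmt_6 {X : Type*} [NormedAddCommGroup X] [InnerProductSpace ℝ X] [CompleteSpace X]
    (L lam : ℝ) (hL : 0 ≤ L) (hlam : 0 < lam) (hLlam : L ≤ lam)
    (x xp gf gfp : X) (H : X →L[ℝ] X)
    (u : X) (hu : u = gfp - gf - H (xp - x) - lam • (xp - x))
    (hbound : ‖gfp - gf - H (xp - x)‖ ≤ L * ‖x - xp‖) :
    (1 / (2 * lam)) * ‖u‖ ^ 2 ≤ ⟪u, x - xp⟫ := by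
  set r := gfp - gf - H (xp - x) with hr
  set d := x - xp with hd
  have hud : u = r + lam • d := by
    rw [hu, hr, hd]
    module
  have hr_le : ‖r‖ ≤ lam * ‖d‖ :=
    hbound.trans (by nlinarith [norm_nonneg d])
  have hnorm : ‖u‖ ^ 2 = ‖r‖ ^ 2 + 2 * lam * ⟪r, d⟫ + lam ^ 2 * ‖d‖ ^ 2 := by
    rw [hud, norm_add_sq_real, real_inner_smul_right, norm_smul, Real.norm_eq_abs,
      abs_of_pos hlam]
    ring
  have hinner : ⟪u, d⟫ = ⟪r, d⟫ + lam * ‖d‖ ^ 2 := by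
    rw [hud, inner_add_left, real_inner_smul_left, real_inner_self_eq_norm_sq]
  rw [hinner, hnorm]
  rw [div_mul_eq_mul_div, one_mul, div_le_iff₀ (by positivity)]
  nlinarith [sq_nonneg (‖r‖ - lam * ‖d‖), norm_nonneg r, norm_nonneg d]
end

section
/- Let X be a real Hilbert space and f : X → ℝ be continuously Fréchet differentiable with gradient ∇f : X → X. Let ψ : X → ℝ, let m ≥ 1, L ≥ 0, and λ ≥ m·L. Let x, x₊ ∈ X and H(x) : X → X a continuous linear operator, and suppose: (a) for all x̃, ỹ on the segment [x, x₊] one has ‖∇f(ỹ) − ∇f(x̃) − H(x̃)(ỹ − x̃)‖ ≤ L‖x̃ − ỹ‖ (where H(x̃) is a continuous linear operator assigned to x̃); and (b) model nonincrease: f(x) + ⟪∇f(x), x₊ − x⟫ + (1/2)⟪H(x)(x₊ − x), x₊ − x⟫ + (λ/2)‖x₊ − x‖² + ψ(x₊) ≤ f(x) + ψ(x). Then f(x₊) + ψ(x₊) ≤ f(x) + ψ(x) − ((m−1)/(2m))·λ·‖x₊ − x‖². -/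
open scoped RealInnerProductSpace

/-- Second part of Lemma 3.1: sufficient decrease once `λ ≥ mL`, given model nonincrease and the
main regularity inequality on the segment `[x, xp]`. -/
theorem stmt_7 {X : Type*} [NormedAddCommGroup X] [InnerProductSpace ℝ X] [CompleteSpace X]
    (f : X → ℝ) (G : X → X) (hf : ∀ z : X, HasGradientAt f (G z) z) (hG : Continuous G)
    (ψ : X → ℝ) (m L lam : ℝ) (hm : 1 ≤ m) (hL : 0 ≤ L) (hlam : m * L ≤ lam)
    (x xp : X) (H : X → X →L[ℝ] X)
    (hseg : ∀ xt ∈ segment ℝ x xp, ∀ yt ∈ segment ℝ x xp,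
      ‖G yt - G xt - H xt (yt - xt)‖ ≤ L * ‖xt - yt‖)
    (hmodel : f x + ⟪G x, xp - x⟫ + (1 / 2) * ⟪H x (xp - x), xp - x⟫
        + (lam / 2) * ‖xp - x‖ ^ 2 + ψ xp ≤ f x + ψ x) :
    f xp + ψ xp ≤ f x + ψ x - ((m - 1) / (2 * m)) * lam * ‖xp - x‖ ^ 2 := by
  set d : X := xp - x with hd
  -- auxiliary function
  set φ : ℝ → ℝ := fun t => f (x + t • d) - t * ⟪G x, d⟫ - t ^ 2 / 2 * ⟪H x d, d⟫
      - L * ‖d‖ ^ 2 * t ^ 2 / 2 with hφ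
  have hline : ∀ t : ℝ, HasDerivAt (fun t : ℝ => x + t • d) d t := by
    intro t
    simpa using ((hasDerivAt_id t).smul_const d).const_add x
  have hderiv : ∀ t : ℝ, HasDerivAt φ
      (⟪G (x + t • d), d⟫ - ⟪G x, d⟫ - t * ⟪H x d, d⟫ - L * ‖d‖ ^ 2 * t) t := by
    intro t
    have h1 : HasDerivAt (fun t : ℝ => f (x + t • d)) ⟪G (x + t • d), d⟫ t := by
      have := ((hf (x + t • d)).hasFDerivAt).comp_hasDerivAt t (hline t)
      simpa [InnerProductSpace.toDual_apply_apply, Function.comp_def] using this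
    have h2 : HasDerivAt (fun t : ℝ => t * ⟪G x, d⟫) ⟪G x, d⟫ t := by
      simpa using (hasDerivAt_id t).mul_const ⟪G x, d⟫
    have h3 : HasDerivAt (fun t : ℝ => t ^ 2 / 2 * ⟪H x d, d⟫) (t * ⟪H x d, d⟫) t := by
      have : HasDerivAt (fun t : ℝ => t ^ 2 / 2) t t := by
        simpa using (hasDerivAt_pow 2 t).div_const 2
      simpa using this.mul_const ⟪H x d, d⟫
    have h4 : HasDerivAt (fun t : ℝ => L * ‖d‖ ^ 2 * t ^ 2 / 2) (L * ‖d‖ ^ 2 * t) t := by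
      have : HasDerivAt (fun t : ℝ => t ^ 2) (2 * t) t := by
        simpa using hasDerivAt_pow 2 t
      have := ((this.const_mul (L * ‖d‖ ^ 2)).div_const 2)
      refine this.congr_deriv ?_
      ring
    exact ((h1.sub h2).sub h3).sub h4
  have hmem : ∀ t : ℝ, t ∈ Set.Icc (0:ℝ) 1 → x + t • d ∈ segment ℝ x xp := by
    intro t ht
    rw [segment_eq_image']
    exact ⟨t, ht, rfl⟩
  have hx0 : x ∈ segment ℝ x xp := left_mem_segment ℝ x xp
  have hanti : AntitoneOn φ (Set.Icc (0:ℝ) 1) := by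
    apply antitoneOn_of_hasDerivWithinAt_nonpos (convex_Icc 0 1)
      (fun t _ => (hderiv t).continuousAt.continuousWithinAt)
      (fun t _ => (hderiv t).hasDerivWithinAt)
    intro t ht
    rw [interior_Icc] at ht
    have hts : x + t • d ∈ segment ℝ x xp := hmem t ⟨le_of_lt ht.1, le_of_lt ht.2⟩
    have key := hseg x hx0 (x + t • d) hts
    have e1 : x + t • d - x = t • d := by abel
    rw [e1] at key
    have e2 : ‖x - (x + t • d)‖ = t * ‖d‖ := by
      rw [show x - (x + t • d) = -(t • d) by abel, norm_neg, norm_smul,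
        Real.norm_eq_abs, abs_of_pos ht.1]
    rw [e2] at key
    have hH : (H x) (t • d) = t • (H x) d := by simp
    have hinner : ⟪G (x + t • d) - G x - t • (H x) d, d⟫ ≤ L * (t * ‖d‖) * ‖d‖ := by
      calc ⟪G (x + t • d) - G x - t • (H x) d, d⟫
          ≤ ‖G (x + t • d) - G x - t • (H x) d‖ * ‖d‖ := real_inner_le_norm _ _
        _ ≤ L * (t * ‖d‖) * ‖d‖ := by
            apply mul_le_mul_of_nonneg_right _ (norm_nonneg d)
            rw [← hH]; exact key
    rw [inner_sub_left, inner_sub_left, real_inner_smul_left] at hinner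
    nlinarith [hinner]
  have hφ10 : φ 1 ≤ φ 0 :=
    hanti (Set.left_mem_Icc.2 zero_le_one) (Set.right_mem_Icc.2 zero_le_one) zero_le_one
  have hxp : x + (1:ℝ) • d = xp := by simp [hd]
  have hTaylor : f xp ≤ f x + ⟪G x, d⟫ + (1/2) * ⟪H x d, d⟫ + L * ‖d‖ ^ 2 / 2 := by
    have := hφ10
    simp only [hφ, hxp, one_pow, zero_smul, add_zero, one_mul, zero_mul, mul_zero] at this
    nlinarith [this]
  -- combine with model nonincrease
  have hm0 : (0:ℝ) < m := lt_of_lt_of_le one_pos hm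
  have hstep : ⟪G x, d⟫ + (1/2) * ⟪H x d, d⟫ + (lam / 2) * ‖d‖ ^ 2 + ψ xp ≤ ψ x := by
    linarith [hmodel]
  have hlamL : L * ‖d‖ ^ 2 / 2 ≤ lam / (2 * m) * ‖d‖ ^ 2 := by
    have hL' : L ≤ lam / m := (le_div_iff₀ hm0).2 (by linarith [hlam])
    have : L * ‖d‖ ^ 2 ≤ lam / m * ‖d‖ ^ 2 :=
      mul_le_mul_of_nonneg_right hL' (sq_nonneg _)
    have h3 : lam / (2 * m) * ‖d‖ ^ 2 = lam / m * ‖d‖ ^ 2 / 2 := by ring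
    linarith [this]
  have hfinal : lam / 2 - lam / (2 * m) = (m - 1) / (2 * m) * lam := by
    field_simp
  have := hm0.ne'
  nlinarith [hTaylor, hstep, hlamL, hfinal]
end

section
/- Let α > 0, β > 0 and F* ∈ ℝ. Let F : ℕ → ℝ, g : ℕ → ℝ with g(i) ≥ 0, and λ : ℕ → ℝ with λ(i) > 0, and suppose F(i) ≥ F* and F(i) − F(i+1) ≥ (β·α²/λ(i))·g(i+1)² for all i. Then for every k ≥ 1, min over 0 ≤ i ≤ k−1 of g(i+1)² is at most ((F(0) − F*)/(β·α²)) · ( (∏_{i=0}^{k−1} λ(i))^{1/k} ) / k. -/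
/-- Refined bound inside Theorem 4.1 (via AM–GM): the minimal squared subgradient norm is
bounded by the geometric mean of the regularization parameters divided by `k`. -/
theorem stmt_11 (α β Fstar : ℝ) (hα : 0 < α) (hβ : 0 < β)
    (F g lam : ℕ → ℝ) (hg : ∀ i, 0 ≤ g i) (hlam : ∀ i, 0 < lam i)
    (hF : ∀ i, Fstar ≤ F i)
    (hdec : ∀ i, (β * α ^ 2 / lam i) * g (i + 1) ^ 2 ≤ F i - F (i + 1)) :
    ∀ k : ℕ, 1 ≤ k →
      ∃ i < k, g (i + 1) ^ 2 ≤
        ((F 0 - Fstar) / (β * α ^ 2)) * ((∏ j ∈ Finset.range k, lam j) ^ ((1 : ℝ) / k)) / k := by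
  intro k hk
  have hk0 : (0 : ℝ) < k := by exact_mod_cast hk
  obtain ⟨i, hik, hmin⟩ := Finset.exists_min_image (Finset.range k)
    (fun i => g (i + 1) ^ 2) ⟨0, Finset.mem_range.mpr hk⟩
  refine ⟨i, Finset.mem_range.mp hik, ?_⟩
  set m := g (i + 1) ^ 2 with hm
  have hm0 : 0 ≤ m := sq_nonneg _
  have hc : 0 < β * α ^ 2 := by positivity
  set S := ∑ j ∈ Finset.range k, (lam j)⁻¹ with hS
  set P := (∏ j ∈ Finset.range k, lam j) ^ ((1 : ℝ) / k) with hP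
  have hPpos : 0 < P := by
    rw [hP]
    exact Real.rpow_pos_of_pos (Finset.prod_pos fun j _ => hlam j) _
  -- telescoping
  have hsum : ∑ j ∈ Finset.range k, (β * α ^ 2 / lam j) * g (j + 1) ^ 2 ≤ F 0 - Fstar := by
    calc ∑ j ∈ Finset.range k, (β * α ^ 2 / lam j) * g (j + 1) ^ 2
        ≤ ∑ j ∈ Finset.range k, (F j - F (j + 1)) :=
          Finset.sum_le_sum fun j _ => hdec j
      _ = F 0 - F k := Finset.sum_range_sub' F k
      _ ≤ F 0 - Fstar := by linarith [hF k]
  have hmain : m * (β * α ^ 2) * S ≤ F 0 - Fstar := by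
    have h1 : m * (β * α ^ 2) * S = ∑ j ∈ Finset.range k, (β * α ^ 2 / lam j) * m := by
      rw [hS, Finset.mul_sum]
      refine Finset.sum_congr rfl fun j _ => ?_
      field_simp
    rw [h1]
    refine le_trans (Finset.sum_le_sum fun j hj => ?_) hsum
    exact mul_le_mul_of_nonneg_left (hmin j hj) (div_nonneg hc.le (hlam j).le)
  -- AM-GM
  have hamgm : P⁻¹ ≤ (1 / k) * S := by
    have h := Real.geom_mean_le_arith_mean_weighted (Finset.range k)
      (fun _ => (1 : ℝ) / k) (fun j => (lam j)⁻¹)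
      (fun j _ => by positivity)
      (by simp [Finset.sum_const, Finset.card_range]; field_simp)
      (fun j _ => inv_nonneg.mpr (hlam j).le)
    have hprod : ∏ j ∈ Finset.range k, ((lam j)⁻¹) ^ ((1 : ℝ) / k) = P⁻¹ := by
      rw [Real.finset_prod_rpow _ _ (fun j _ => inv_nonneg.mpr (hlam j).le), Finset.prod_inv_distrib, hP,
        Real.inv_rpow (Finset.prod_nonneg fun j _ => (hlam j).le)]
    calc P⁻¹ = ∏ j ∈ Finset.range k, ((lam j)⁻¹) ^ ((1 : ℝ) / k) := hprod.symm
      _ ≤ ∑ j ∈ Finset.range k, (1 / (k : ℝ)) * (lam j)⁻¹ := h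
      _ = (1 / k) * S := by rw [hS, Finset.mul_sum]
  -- combine
  have hk2 : (k : ℝ) ≤ S * P := by
    have := mul_le_mul_of_nonneg_left hamgm (le_of_lt hPpos)
    rw [mul_inv_cancel₀ (ne_of_gt hPpos)] at this
    have h2 := mul_le_mul_of_nonneg_left this (le_of_lt hk0)
    rw [mul_one] at h2
    calc (k : ℝ) ≤ (k : ℝ) * (P * (1 / k * S)) := h2
      _ = S * P := by field_simp
  have hF0 : 0 ≤ F 0 - Fstar := by linarith [hF 0]
  rw [div_mul_eq_mul_div, div_div, le_div_iff₀ (by positivity)]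
  have e1 : m * (β * α ^ 2) * (k : ℝ) ≤ m * (β * α ^ 2) * (S * P) :=
    mul_le_mul_of_nonneg_left hk2 (by positivity)
  have e2 : m * (β * α ^ 2) * S * P ≤ (F 0 - Fstar) * P :=
    mul_le_mul_of_nonneg_right hmain (le_of_lt hPpos)
  nlinarith [e1, e2]
end

section
/- Let α > 0, β > 0, μ > 0 and λ̄ > 0. Let F : ℕ → ℝ, g : ℕ → ℝ with g(k) ≥ 0, and λ : ℕ → ℝ with 0 < λ(k) ≤ λ̄, and suppose for all k: F(k) ≥ 0, F(k) − F(k+1) ≥ (β·α²/λ(k))·g(k+1)², and g(k+1)² ≥ 2·μ·F(k+1). Then for every k ≥ 0, F(k) ≤ exp( −(2·β·α²·μ / (2·β·α²·μ + λ̄))·k ) · F(0). -/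
/-- Quantitative core of Theorem 4.3(i): global linear convergence of the objective residuals
under the PL condition. -/
theorem stmt_13 (α β μ lamb : ℝ) (hα : 0 < α) (hβ : 0 < β) (hμ : 0 < μ) (hlamb : 0 < lamb)
    (F g lam : ℕ → ℝ) (hg : ∀ k, 0 ≤ g k)
    (hlam : ∀ k, 0 < lam k ∧ lam k ≤ lamb)
    (hF : ∀ k, 0 ≤ F k)
    (hdec : ∀ k, (β * α ^ 2 / lam k) * g (k + 1) ^ 2 ≤ F k - F (k + 1))
    (hPL : ∀ k, 2 * μ * F (k + 1) ≤ g (k + 1) ^ 2) :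
    ∀ k : ℕ, F k ≤ Real.exp (-(2 * β * α ^ 2 * μ / (2 * β * α ^ 2 * μ + lamb)) * k) * F 0 := by
  have hD : 0 < 2 * β * α ^ 2 * μ + lamb := by positivity
  set c : ℝ := 2 * β * α ^ 2 * μ / (2 * β * α ^ 2 * μ + lamb) with hc
  have key : ∀ k, F (k + 1) * (2 * β * α ^ 2 * μ + lamb) ≤ F k * lamb := by
    intro k
    obtain ⟨h1, h2⟩ := hlam k
    have h3 : (β * α ^ 2 / lam k) * (2 * μ * F (k + 1)) ≤
        (β * α ^ 2 / lam k) * g (k + 1) ^ 2 := by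
      apply mul_le_mul_of_nonneg_left (hPL k)
      positivity
    have h4 := h3.trans (hdec k)
    rw [div_mul_eq_mul_div, div_le_iff₀ h1] at h4
    have h5 : 0 ≤ F k - F (k + 1) := by
      nlinarith [mul_nonneg (mul_nonneg hβ.le (sq_nonneg α)) (mul_nonneg (by positivity : (0:ℝ) ≤ 2 * μ) (hF (k+1)))]
    nlinarith [mul_le_mul_of_nonneg_left h2 h5, hF (k + 1)]
  have hstep : ∀ k, F (k + 1) ≤ (1 - c) * F k := by
    intro k
    have h6 : F (k + 1) ≤ F k * lamb / (2 * β * α ^ 2 * μ + lamb) :=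
      (le_div_iff₀ hD).2 (key k)
    have h7 : (1 - c) * F k = F k * lamb / (2 * β * α ^ 2 * μ + lamb) := by
      rw [hc]; field_simp; ring
    rw [h7]; exact h6
  intro k
  induction k with
  | zero => simp [hF 0]
  | succ n ih =>
    push_cast
    have hexp : (1 - c) ≤ Real.exp (-c) := by
      have := Real.add_one_le_exp (-c); linarith
    have hnn : 0 ≤ Real.exp (-c * n) * F 0 := mul_nonneg (Real.exp_pos _).le (hF 0)
    have hcnn : 0 ≤ 1 - c := by
      rw [hc, sub_nonneg, div_le_one hD]; linarith
    calc F (n + 1) ≤ (1 - c) * F n := hstep n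
      _ ≤ (1 - c) * (Real.exp (-c * n) * F 0) := by
          exact mul_le_mul_of_nonneg_left ih hcnn
      _ ≤ Real.exp (-c) * (Real.exp (-c * n) * F 0) :=
          mul_le_mul_of_nonneg_right hexp hnn
      _ = Real.exp (-c * (n + 1)) * F 0 := by
          rw [← mul_assoc, ← Real.exp_add]; push_cast; ring_nf
end

section
/- Let C ≥ 0, let (rₖ) be a sequence of nonnegative reals and (sₖ) a sequence of reals such that rₖ ≤ rₖ₋₁/2 + C·(sₖ − sₖ₊₁) for all k ≥ 1. Then for all natural numbers l ≥ 0 and n ≥ l + 2: (1/2)·∑_{k=l+1}^{n−1} rₖ ≤ r_l + C·(s_{l+1} − s_{n+1}). -/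
/-- Summability estimate used in the proof of Theorem 4.3(ii): the halving recursion implies
that partial sums of `r` are controlled. -/
theorem stmt_14 (C : ℝ) (hC : 0 ≤ C) (r s : ℕ → ℝ) (hr : ∀ k, 0 ≤ r k)
    (hrec : ∀ k : ℕ, r (k + 1) ≤ r k / 2 + C * (s (k + 1) - s (k + 2))) :
    ∀ l n : ℕ, l + 2 ≤ n →
      (1 / 2) * ∑ k ∈ Finset.Icc (l + 1) (n - 1), r k ≤ r l + C * (s (l + 1) - s (n + 1)) := by
  intro l n hn
  have aux : ∀ m, l ≤ m →
      (1 / 2) * ∑ k ∈ Finset.Icc (l + 1) m, r k + r m / 2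
        ≤ r l / 2 + C * (s (l + 1) - s (m + 1)) := by
    intro m hm
    induction m with
    | zero =>
      have : l = 0 := Nat.le_zero.mp hm
      subst this
      simp [Finset.Icc_eq_empty_of_lt]
    | succ m ih =>
      rcases Nat.lt_or_ge l (m + 1) with h | h
      · have hlm : l ≤ m := Nat.lt_succ_iff.mp h
        have ih' := ih hlm
        rw [Finset.sum_Icc_succ_top (Nat.succ_le_succ hlm)]
        have h1 := hrec m
        linarith
      · have : l = m + 1 := le_antisymm hm h
        subst this
        simp [Finset.Icc_eq_empty_of_lt]
  obtain ⟨m, rfl⟩ : ∃ m, n = m + 1 := ⟨n - 1, by omega⟩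
  have hm : l ≤ m := by omega
  have h1 := aux m hm
  have h2 := hrec m
  have h3 := hr (m + 1)
  have h4 := hr m
  have h5 := hr l
  simp only [Nat.add_sub_cancel] at *
  show _ ≤ r l + C * (s (l + 1) - s (m + 2))
  have key : C * (s (l + 1) - s (m + 2)) = C * (s (l + 1) - s (m + 1)) + C * (s (m + 1) - s (m + 2)) := by ring
  linarith
end

section
/- Let α > 0, D₀ > 0, λ̄ > 0. Let F : ℕ → ℝ, g : ℕ → ℝ, and λ : ℕ → ℝ be sequences with, for all j: F(j) > 0, g(j) ≥ 0, 0 < λ(j) ≤ λ̄, F(j) − F(j+1) ≥ (α/λ(j))·g(j+1)², and F(j) ≤ g(j)·D₀. Then for every k ≥ 1, F(k) ≤ g(0)·D₀·exp(−k/4) + 2·D₀²·λ̄/(α·k). -/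
/-- Quantitative core of Theorem 4.7: global `O(1/k)` rate for the objective residuals in the
convex case. -/
theorem stmt_15 (α D₀ lamb : ℝ) (hα : 0 < α) (hD : 0 < D₀) (hlamb : 0 < lamb)
    (F g lam : ℕ → ℝ)
    (hF : ∀ j, 0 < F j) (hg : ∀ j, 0 ≤ g j)
    (hlam : ∀ j, 0 < lam j ∧ lam j ≤ lamb)
    (hdec : ∀ j, (α / lam j) * g (j + 1) ^ 2 ≤ F j - F (j + 1))
    (hconv : ∀ j, F j ≤ g j * D₀) :
    ∀ k : ℕ, 1 ≤ k →
      F k ≤ g 0 * D₀ * Real.exp (-(k : ℝ) / 4) + 2 * D₀ ^ 2 * lamb / (α * k) := by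
  intro k hk
  set c := α / (lamb * D₀ ^ 2) with hcdef
  have hcpos : 0 < c := div_pos hα (by positivity)
  -- key per-step inequality
  have key : ∀ j, c * (F (j + 1) / F j) ≤ 1 / F (j + 1) - 1 / F j := by
    intro j
    have hFj := hF j
    have hFj1 := hF (j + 1)
    have h1 : F (j + 1) ^ 2 / D₀ ^ 2 ≤ g (j + 1) ^ 2 := by
      rw [div_le_iff₀ (by positivity)]
      nlinarith [hconv (j + 1), hg (j + 1), hFj1]
    have h2 : α / lamb ≤ α / lam j := by
      apply div_le_div_of_nonneg_left hα.le (hlam j).1 (hlam j).2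
    have main : c * F (j + 1) ^ 2 ≤ F j - F (j + 1) := by
      have e : c * F (j + 1) ^ 2 = (α / lamb) * (F (j + 1) ^ 2 / D₀ ^ 2) := by
        rw [hcdef]; field_simp
      calc c * F (j + 1) ^ 2 = (α / lamb) * (F (j + 1) ^ 2 / D₀ ^ 2) := e
        _ ≤ (α / lamb) * g (j + 1) ^ 2 := by
            apply mul_le_mul_of_nonneg_left h1 (by positivity)
        _ ≤ (α / lam j) * g (j + 1) ^ 2 := by
            apply mul_le_mul_of_nonneg_right h2 (sq_nonneg _)
        _ ≤ F j - F (j + 1) := hdec j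
    have expand : 1 / F (j + 1) - 1 / F j = (F j - F (j + 1)) / (F j * F (j + 1)) := by
      field_simp
    have expand2 : c * (F (j + 1) / F j) = (c * F (j + 1) ^ 2) / (F j * F (j + 1)) := by
      field_simp
    rw [expand, expand2]
    exact div_le_div_of_nonneg_right main (by positivity) |>.trans_eq rfl
  have hmono : ∀ j, F (j + 1) ≤ F j := by
    intro j
    have h := hdec j
    nlinarith [mul_nonneg (div_pos hα (hlam j).1).le (sq_nonneg (g (j + 1)))]
  set r : ℕ → ℝ := fun j => F (j + 1) / F j with hr
  have hrpos : ∀ j, 0 < r j := fun j => div_pos (hF _) (hF _)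
  set T := ∑ j ∈ Finset.range k, r j with hT
  -- sum telescoping
  have sum_key : c * T ≤ 1 / F k - 1 / F 0 := by
    rw [← Finset.sum_range_sub (fun j => 1 / F j) k, hT, Finset.mul_sum]
    exact Finset.sum_le_sum fun j _ => key j
  -- product telescoping
  have prod_eq : ∀ n : ℕ, F n = F 0 * ∏ j ∈ Finset.range n, r j := by
    intro n
    induction n with
    | zero => simp
    | succ n ih =>
      rw [Finset.prod_range_succ, ← mul_assoc, ← ih]
      show F (n + 1) = F n * (F (n + 1) / F n)
      rw [mul_comm, div_mul_cancel₀ _ (hF n).ne']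
  have prod_le : (∏ j ∈ Finset.range k, r j) ≤ Real.exp (T - k) := by
    have h1 : (∏ j ∈ Finset.range k, r j) ≤ ∏ j ∈ Finset.range k, Real.exp (r j - 1) := by
      apply Finset.prod_le_prod (fun j _ => (hrpos j).le)
      intro j _
      have := Real.add_one_le_exp (r j - 1)
      linarith
    calc (∏ j ∈ Finset.range k, r j) ≤ ∏ j ∈ Finset.range k, Real.exp (r j - 1) := h1
      _ = Real.exp (∑ j ∈ Finset.range k, (r j - 1)) := (Real.exp_sum _ _).symm
      _ = Real.exp (T - k) := by rw [Finset.sum_sub_distrib]; simp [hT]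
  have hkpos : (0 : ℝ) < k := by exact_mod_cast hk
  by_cases hcase : T ≤ 3 * k / 4
  · -- exponential phase dominates
    have h1 : F k ≤ F 0 * Real.exp (-(k : ℝ) / 4) := by
      rw [prod_eq k]
      have := Real.exp_le_exp.mpr (show T - k ≤ -(k : ℝ) / 4 by linarith)
      nlinarith [prod_le, (hF 0), Real.exp_pos (-(k : ℝ) / 4)]
    have h2 : F 0 * Real.exp (-(k : ℝ) / 4) ≤ g 0 * D₀ * Real.exp (-(k : ℝ) / 4) := by
      apply mul_le_mul_of_nonneg_right (hconv 0) (Real.exp_pos _).le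
    have h3 : 0 ≤ 2 * D₀ ^ 2 * lamb / (α * k) := by positivity
    linarith
  · push_neg at hcase
    have hT2 : (k : ℝ) / 2 ≤ T := by linarith
    have h1 : c * ((k : ℝ) / 2) ≤ 1 / F k := by
      have h0 : 0 < 1 / F 0 := one_div_pos.mpr (hF 0)
      have : c * ((k : ℝ) / 2) ≤ c * T := by
        apply mul_le_mul_of_nonneg_left hT2 hcpos.le
      linarith
    have hck : 0 < c * ((k : ℝ) / 2) := mul_pos hcpos (half_pos hkpos)
    have h2 : F k ≤ 1 / (c * ((k : ℝ) / 2)) := by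
      rw [le_div_iff₀ hck]
      calc F k * (c * ((k : ℝ) / 2)) ≤ F k * (1 / F k) := by
            apply mul_le_mul_of_nonneg_left h1 (hF k).le
        _ = 1 := mul_one_div_cancel (hF k).ne'
    have h3 : 1 / (c * ((k : ℝ) / 2)) = 2 * D₀ ^ 2 * lamb / (α * k) := by
      rw [hcdef]
      field_simp
    have h4 : 0 ≤ g 0 * D₀ * Real.exp (-(k : ℝ) / 4) :=
      mul_nonneg (mul_nonneg (hg 0) hD.le) (Real.exp_pos _).le
    linarith [h2.trans_eq h3]
end

section
/- Let α > 0, D₀ > 0, λ̄ > 0. Let F : ℕ → ℝ, g : ℕ → ℝ, and λ : ℕ → ℝ be sequences with, for all j: F(j) ≥ 0, g(j) ≥ 0, 0 < λ(j) ≤ λ̄, F(j) − F(j+1) ≥ (α/λ(j))·g(j+1)², and F(j) ≤ g(j)·D₀ whenever F(j) > 0 (with F(j) ≤ g(j)·D₀ holding for all j). Then for every k ≥ 1, min over k ≤ i ≤ 2k of g(i+1) is at most 2·sqrt( λ̄·g(0)·D₀/(α·k) )·exp(−k/8) + 4·D₀·λ̄/(α·k). -/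
open Finset

private lemma sqrt_add_le' (x y : ℝ) (hx : 0 ≤ x) (hy : 0 ≤ y) :
    Real.sqrt (x + y) ≤ Real.sqrt x + Real.sqrt y := by
  have h : x + y ≤ (Real.sqrt x + Real.sqrt y) ^ 2 := by
    have hx' := Real.sq_sqrt hx
    have hy' := Real.sq_sqrt hy
    nlinarith [Real.sqrt_nonneg x, Real.sqrt_nonneg y,
      mul_nonneg (Real.sqrt_nonneg x) (Real.sqrt_nonneg y)]
  calc Real.sqrt (x + y) ≤ Real.sqrt ((Real.sqrt x + Real.sqrt y) ^ 2) := Real.sqrt_le_sqrt h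
    _ = Real.sqrt x + Real.sqrt y := by
        rw [Real.sqrt_sq (by positivity)]

private lemma rate_aux (c : ℝ) (hc : 0 < c) (a : ℕ → ℝ) (ha : ∀ j, 0 ≤ a j)
    (hkey : ∀ j, c * a (j + 1) ^ 2 ≤ a j - a (j + 1)) (k : ℕ) (hk : 1 ≤ k) :
    a k ≤ a 0 * Real.exp (-(k : ℝ) / 4) + 4 / (c * k) := by
  classical
  have hkpos : (0 : ℝ) < (k : ℝ) := by exact_mod_cast hk
  have hmono : ∀ j, a (j + 1) ≤ a j := fun j => by nlinarith [hkey j, sq_nonneg (a (j + 1))]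
  set P : ℕ → Prop := fun j => a (j + 1) ≤ a j / 2 with hP
  have lemA : ∀ n, a n ≤ a 0 * (1 / 2 : ℝ) ^ ((range n).filter P).card := by
    intro n
    induction n with
    | zero => simp
    | succ n ih =>
      rw [range_add_one, filter_insert]
      by_cases h : P n
      · rw [if_pos h, card_insert_of_notMem (by simp)]
        have h2 : a (n + 1) ≤ a n / 2 := h
        calc a (n + 1) ≤ a n / 2 := h2
          _ ≤ (a 0 * (1 / 2 : ℝ) ^ ((range n).filter P).card) / 2 := by linarith
          _ = a 0 * (1 / 2 : ℝ) ^ (((range n).filter P).card + 1) := by ring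
      · rw [if_neg h]
        exact (hmono n).trans ih
  have lemB : ∀ n, 0 < a n →
      (c / 2) * ((range n).filter (fun j => ¬P j)).card ≤ 1 / a n := by
    intro n
    induction n with
    | zero =>
      intro h
      simp only [range_zero, filter_empty, card_empty, Nat.cast_zero, mul_zero]
      exact (one_div_pos.mpr h).le
    | succ n ih =>
      intro hpos
      have hposn : 0 < a n := lt_of_lt_of_le hpos (hmono n)
      have ihn := ih hposn
      rw [range_add_one, filter_insert]
      by_cases h : P n
      · rw [if_neg (by simp [h])]
        refine ihn.trans ?_
        exact one_div_le_one_div_of_le hpos (hmono n)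
      · rw [if_pos (by simp [h]), card_insert_of_notMem (by simp)]
        have hhalf : a n / 2 < a (n + 1) := not_le.mp h
        have hkn := hkey n
        have step : 1 / a n + c / 2 ≤ 1 / a (n + 1) := by
          rw [div_add_div _ _ (ne_of_gt hposn) (two_ne_zero), div_le_div_iff₀ (by positivity) hpos]
          nlinarith [mul_pos (show (0:ℝ) < 2 * a (n + 1) - a n by linarith) (mul_pos hc hpos)]
        push_cast
        linarith
  have hsplit := card_filter_add_card_filter_not (s := range k) (p := P)
  rw [card_range] at hsplit
  set H := ((range k).filter P).card
  set N := ((range k).filter (fun j => ¬P j)).card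
  have hrhs2 : 0 < 4 / (c * (k : ℝ)) := by positivity
  have hrhs1 : 0 ≤ a 0 * Real.exp (-(k : ℝ) / 4) :=
    mul_nonneg (ha 0) (Real.exp_pos _).le
  rcases Nat.lt_or_ge (2 * H) k with hcase | hcase
  · -- then 2 * N ≥ k
    have hN : k ≤ 2 * N := by omega
    rcases eq_or_lt_of_le (ha k) with heq | hak
    · rw [← heq]; linarith
    · have hB := lemB k hak
      have hNk : (k : ℝ) ≤ 2 * N := by exact_mod_cast hN
      have h1 : c * k / 4 ≤ 1 / a k := by
        calc c * k / 4 ≤ (c / 2) * N := by nlinarith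
          _ ≤ 1 / a k := hB
      have h2 : a k * (1 / a k) = 1 := mul_one_div_cancel (ne_of_gt hak)
      have h3 : a k ≤ 4 / (c * k) := by
        rw [le_div_iff₀ (by positivity)]
        nlinarith [mul_le_mul_of_nonneg_left h1 (ha k)]
      linarith
  · -- 2 * H ≥ k
    have hHk : (k : ℝ) ≤ 2 * H := by exact_mod_cast hcase
    have e1 : ((1 : ℝ) / 2) ^ H ≤ Real.exp (-(k : ℝ) / 4) := by
      have hpow : ((1 : ℝ) / 2) ^ H = Real.exp (H * Real.log (1 / 2)) := by
        rw [← Real.log_pow, Real.exp_log (by positivity)]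
      rw [hpow, Real.exp_le_exp, show Real.log (1 / 2) = -Real.log 2 by
        rw [one_div, Real.log_inv]]
      nlinarith [Real.log_two_gt_d9]
    calc a k ≤ a 0 * (1 / 2 : ℝ) ^ H := lemA k
      _ ≤ a 0 * Real.exp (-(k : ℝ) / 4) := mul_le_mul_of_nonneg_left e1 (ha 0)
      _ ≤ _ := by linarith

set_option maxHeartbeats 1000000 in
/-- Quantitative core of Theorem 4.8: global `O(1/k)` rate for the minimal subgradient norm in
the convex case. -/
theorem stmt_16 (α D₀ lamb : ℝ) (hα : 0 < α) (hD : 0 < D₀) (hlamb : 0 < lamb)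
    (F g lam : ℕ → ℝ)
    (hF : ∀ j, 0 ≤ F j) (hg : ∀ j, 0 ≤ g j)
    (hlam : ∀ j, 0 < lam j ∧ lam j ≤ lamb)
    (hdec : ∀ j, (α / lam j) * g (j + 1) ^ 2 ≤ F j - F (j + 1))
    (hconv : ∀ j, F j ≤ g j * D₀) :
    ∀ k : ℕ, 1 ≤ k → ∃ i, k ≤ i ∧ i ≤ 2 * k ∧
      g (i + 1) ≤ 2 * Real.sqrt (lamb * g 0 * D₀ / (α * k)) * Real.exp (-(k : ℝ) / 8)
        + 4 * D₀ * lamb / (α * k) := by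
  intro k hk
  have hkpos : (0 : ℝ) < (k : ℝ) := by exact_mod_cast hk
  set c : ℝ := α / (lamb * D₀ ^ 2) with hcdef
  have hc : 0 < c := by positivity
  -- key decrease inequality in terms of F
  have hkey : ∀ j, c * F (j + 1) ^ 2 ≤ F j - F (j + 1) := by
    intro j
    obtain ⟨hl1, hl2⟩ := hlam j
    have h1 : α / lamb ≤ α / lam j := by gcongr
    have h2 : F (j + 1) ^ 2 / D₀ ^ 2 ≤ g (j + 1) ^ 2 := by
      rw [div_le_iff₀ (by positivity)]
      nlinarith [hconv (j + 1), hF (j + 1), hg (j + 1)]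
    have h3 : c * F (j + 1) ^ 2 = (α / lamb) * (F (j + 1) ^ 2 / D₀ ^ 2) := by
      rw [hcdef]; field_simp
    calc c * F (j + 1) ^ 2 = (α / lamb) * (F (j + 1) ^ 2 / D₀ ^ 2) := h3
      _ ≤ (α / lam j) * g (j + 1) ^ 2 :=
          mul_le_mul h1 h2 (by positivity) (le_of_lt (by positivity))
      _ ≤ F j - F (j + 1) := hdec j
  have hrate := rate_aux c hc F hF hkey k hk
  -- minimum over Icc k (2k)
  obtain ⟨i, hi_mem, hi_min⟩ := Finset.exists_min_image (Finset.Icc k (2 * k))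
    (fun i => g (i + 1)) ⟨k, by simp [Finset.mem_Icc]; omega⟩
  simp only [Finset.mem_Icc] at hi_mem
  refine ⟨i, hi_mem.1, hi_mem.2, ?_⟩
  -- sum bound
  have htel : ∑ j ∈ Finset.range (k + 1), (F (k + j) - F (k + j + 1)) = F k - F (k + (k + 1)) :=
    Finset.sum_range_sub' (fun j => F (k + j)) (k + 1)
  have hsum : (k + 1 : ℝ) * ((α / lamb) * g (i + 1) ^ 2) ≤ F k := by
    have step1 : (k + 1 : ℝ) * ((α / lamb) * g (i + 1) ^ 2)
        ≤ ∑ j ∈ Finset.range (k + 1), (α / lamb) * g (k + j + 1) ^ 2 := by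
      have hterm : ∀ j ∈ Finset.range (k + 1), (α / lamb) * g (i + 1) ^ 2
          ≤ (α / lamb) * g (k + j + 1) ^ 2 := by
        intro j hj
        simp only [Finset.mem_range] at hj
        have hmem : k + j ∈ Finset.Icc k (2 * k) := by
          simp only [Finset.mem_Icc]; omega
        have hmin := hi_min (k + j) hmem
        have hsq : g (i + 1) ^ 2 ≤ g (k + j + 1) ^ 2 := by
          nlinarith [hg (i + 1), hg (k + j + 1)]
        have hnn : (0:ℝ) ≤ α / lamb := by positivity
        nlinarith
      calc (k + 1 : ℝ) * ((α / lamb) * g (i + 1) ^ 2)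
          = ∑ _j ∈ Finset.range (k + 1), (α / lamb) * g (i + 1) ^ 2 := by
            rw [Finset.sum_const, Finset.card_range, nsmul_eq_mul]; push_cast; ring
        _ ≤ _ := Finset.sum_le_sum hterm
    have step2 : ∑ j ∈ Finset.range (k + 1), (α / lamb) * g (k + j + 1) ^ 2
        ≤ ∑ j ∈ Finset.range (k + 1), (F (k + j) - F (k + j + 1)) := by
      apply Finset.sum_le_sum
      intro j _
      obtain ⟨hl1, hl2⟩ := hlam (k + j)
      have h1 : α / lamb ≤ α / lam (k + j) := by gcongr
      calc (α / lamb) * g (k + j + 1) ^ 2 ≤ (α / lam (k + j)) * g (k + j + 1) ^ 2 :=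
            mul_le_mul_of_nonneg_right h1 (by positivity)
        _ ≤ F (k + j) - F (k + j + 1) := hdec (k + j)
    calc (k + 1 : ℝ) * ((α / lamb) * g (i + 1) ^ 2) ≤ _ := step1
      _ ≤ _ := step2
      _ = F k - F (k + (k + 1)) := htel
      _ ≤ F k := by linarith [hF (k + (k + 1))]
  -- g (i+1)^2 ≤ lamb * F k / (α * k)
  have hg2 : g (i + 1) ^ 2 ≤ lamb * F k / (α * k) := by
    rw [le_div_iff₀ (by positivity)]
    have h0 : 0 ≤ (α / lamb) * g (i + 1) ^ 2 := by positivity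
    have hkk : (k : ℝ) * ((α / lamb) * g (i + 1) ^ 2) ≤ F k := by nlinarith
    calc g (i + 1) ^ 2 * (α * k) = (k : ℝ) * ((α / lamb) * g (i + 1) ^ 2) * lamb := by
          field_simp
      _ ≤ F k * lamb := by nlinarith
      _ = lamb * F k := by ring
  -- combine with rate
  have hF0 : F 0 ≤ g 0 * D₀ := hconv 0
  have hc4 : 4 / (c * k) = 4 * lamb * D₀ ^ 2 / (α * k) := by
    rw [hcdef]; field_simp
  rw [hc4] at hrate
  have hexp : (0:ℝ) < Real.exp (-(k : ℝ) / 4) := Real.exp_pos _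
  have hFk : F k ≤ g 0 * D₀ * Real.exp (-(k:ℝ)/4) + 4 * lamb * D₀ ^ 2 / (α * k) := by
    nlinarith [mul_le_mul_of_nonneg_right hF0 hexp.le]
  have hX0 : 0 ≤ lamb * g 0 * D₀ / (α * k) := by
    have := hg 0
    positivity
  have hbound : lamb * F k / (α * k)
      ≤ (lamb * g 0 * D₀ / (α * k)) * Real.exp (-(k : ℝ) / 4)
        + (2 * D₀ * lamb / (α * k)) ^ 2 := by
    have hstep : lamb * F k / (α * k)
        ≤ lamb * (g 0 * D₀ * Real.exp (-(k:ℝ)/4) + 4 * lamb * D₀ ^ 2 / (α * k)) / (α * k) :=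
      (div_le_div_iff_of_pos_right (by positivity)).mpr (mul_le_mul_of_nonneg_left hFk hlamb.le)
    refine hstep.trans (le_of_eq ?_)
    field_simp
    ring
  -- take square roots
  have hfinal : g (i + 1) ≤ Real.sqrt ((lamb * g 0 * D₀ / (α * k)) * Real.exp (-(k : ℝ) / 4))
      + Real.sqrt ((2 * D₀ * lamb / (α * k)) ^ 2) := by
    calc g (i + 1) = Real.sqrt (g (i + 1) ^ 2) := (Real.sqrt_sq (hg (i + 1))).symm
      _ ≤ Real.sqrt ((lamb * g 0 * D₀ / (α * k)) * Real.exp (-(k : ℝ) / 4)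
            + (2 * D₀ * lamb / (α * k)) ^ 2) :=
          Real.sqrt_le_sqrt (hg2.trans hbound)
      _ ≤ _ := sqrt_add_le' _ _ (mul_nonneg hX0 hexp.le) (by positivity)
  have hA : Real.sqrt ((lamb * g 0 * D₀ / (α * k)) * Real.exp (-(k : ℝ) / 4))
      = Real.sqrt (lamb * g 0 * D₀ / (α * k)) * Real.exp (-(k : ℝ) / 8) := by
    rw [show Real.exp (-(k : ℝ) / 4) = Real.exp (-(k : ℝ) / 8) ^ 2 by
        rw [← Real.exp_nat_mul]; congr 1; push_cast; ring,
      Real.sqrt_mul hX0, Real.sqrt_sq (Real.exp_pos _).le]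
  have hB : Real.sqrt ((2 * D₀ * lamb / (α * k)) ^ 2) = 2 * D₀ * lamb / (α * k) := by
    rw [Real.sqrt_sq (by positivity)]
  rw [hA, hB] at hfinal
  have hsn : 0 ≤ Real.sqrt (lamb * g 0 * D₀ / (α * k)) * Real.exp (-(k : ℝ) / 8) :=
    mul_nonneg (Real.sqrt_nonneg _) (Real.exp_pos _).le
  have h2D : 2 * D₀ * lamb / (α * k) ≤ 4 * D₀ * lamb / (α * k) :=
    (div_le_div_iff_of_pos_right (by positivity)).mpr (by nlinarith)
  linarith
end

section
/- Let γ > 0, let (λₖ) and (εₖ) be sequences of nonnegative reals with εₖ → 0, and suppose there is K ∈ ℕ such that for every k ≥ K, either λₖ ≤ λₖ₋₁/2 or λₖ ≤ γ·εₖ. Then λₖ → 0 as k → ∞. -/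
/-- Combinatorial core of Lemma 6.3: if eventually each regularization parameter is at most half
of the previous one or at most `γ·εₖ` with `εₖ → 0`, then `λₖ → 0`. -/
theorem stmt_18 (γ : ℝ) (hγ : 0 < γ) (lam eps : ℕ → ℝ)
    (hlam : ∀ k, 0 ≤ lam k) (heps : ∀ k, 0 ≤ eps k)
    (heps0 : Filter.Tendsto eps Filter.atTop (nhds 0))
    (K : ℕ)
    (hK : ∀ k, K ≤ k → lam (k + 1) ≤ lam k / 2 ∨ lam (k + 1) ≤ γ * eps (k + 1)) :
    Filter.Tendsto lam Filter.atTop (nhds 0) := by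
  rw [Metric.tendsto_atTop]
  intro ε hε
  have hge : Filter.Tendsto (fun k => γ * eps k) Filter.atTop (nhds 0) := by
    simpa using heps0.const_mul γ
  obtain ⟨N0, hN0⟩ := Metric.tendsto_atTop.mp hge (ε / 2) (by linarith)
  set N := max N0 K with hN
  have key : ∀ m, lam (N + m) ≤ max (lam N / 2 ^ m) (ε / 2) := by
    intro m
    induction m with
    | zero => simp
    | succ m ih =>
      have hk : K ≤ N + m := le_trans (le_max_right _ _) (Nat.le_add_right _ _)
      rcases hK (N + m) hk with h | h
      · have h2 : max (lam N / 2 ^ m) (ε / 2) / 2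
            ≤ max (lam N / 2 ^ (m + 1)) (ε / 2) := by
          rcases max_cases (lam N / 2 ^ m) (ε / 2) with ⟨he, _⟩ | ⟨he, _⟩ <;> rw [he]
          · exact le_max_of_le_left (by rw [div_div, ← pow_succ])
          · exact le_max_of_le_right (by linarith)
        calc lam (N + (m + 1)) = lam (N + m + 1) := by ring_nf
          _ ≤ lam (N + m) / 2 := h
          _ ≤ max (lam N / 2 ^ m) (ε / 2) / 2 := by linarith
          _ ≤ _ := h2
      · have h0 : N0 ≤ N + m + 1 := le_trans (le_max_left N0 K : N0 ≤ N) (by omega)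
        have := hN0 (N + m + 1) h0
        rw [Real.dist_eq, sub_zero, abs_of_nonneg (mul_nonneg hγ.le (heps _))] at this
        have : lam (N + (m + 1)) ≤ ε / 2 := by
          have he : N + (m + 1) = N + m + 1 := by ring_nf
          rw [he]; linarith
        exact le_trans this (le_max_right _ _)
  have hpow : Filter.Tendsto (fun m => lam N / 2 ^ m) Filter.atTop (nhds 0) := by
    have : Filter.Tendsto (fun m : ℕ => lam N * (1 / 2 : ℝ) ^ m) Filter.atTop (nhds 0) := by
      simpa using (tendsto_pow_atTop_nhds_zero_of_lt_one (by norm_num)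
        (by norm_num : (1/2 : ℝ) < 1)).const_mul (lam N)
    simpa [div_eq_mul_inv, one_div, inv_pow] using this
  obtain ⟨M, hM⟩ := Metric.tendsto_atTop.mp hpow ε hε
  refine ⟨N + M, fun k hk => ?_⟩
  have hm : lam k ≤ max (lam N / 2 ^ (k - N)) (ε / 2) := by
    have : N + (k - N) = k := by omega
    simpa [this] using key (k - N)
  have hpk := hM (k - N) (by omega)
  rw [Real.dist_eq, sub_zero, abs_of_nonneg (div_nonneg (hlam N) (by positivity))] at hpk
  rw [Real.dist_eq, sub_zero, abs_of_nonneg (hlam k)]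
  rcases le_max_iff.mp hm with h | h <;> linarith
end

section
/- Let X be a real Hilbert space and H : X → (X →L[ℝ] X) a map into continuous linear operators that is continuous at a point x* ∈ X with respect to the operator norm. Let (xₖ) and (yₖ) be sequences in X with xₖ → x* and yₖ → x*, suppose yₖ ≠ xₖ for all k, and suppose there is a constant a > 0 with ‖yₖ − x*‖ ≤ a·‖yₖ − xₖ‖ for all k. Then ‖(H(yₖ) − H(xₖ))(yₖ − x*)‖ / ‖yₖ − xₖ‖ → 0 as k → ∞. -/
/-- Lemma 6.6: continuity of the generalized derivative `H` at `x*` implies the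
Dennis–Moré-type condition along the iterates. -/
theorem stmt_19 {X : Type*} [NormedAddCommGroup X] [InnerProductSpace ℝ X] [CompleteSpace X]
    (H : X → X →L[ℝ] X) (xstar : X) (hH : ContinuousAt H xstar)
    (x y : ℕ → X)
    (hx : Filter.Tendsto x Filter.atTop (nhds xstar))
    (hy : Filter.Tendsto y Filter.atTop (nhds xstar))
    (hne : ∀ k, y k ≠ x k) (a : ℝ) (ha : 0 < a)
    (hbnd : ∀ k, ‖y k - xstar‖ ≤ a * ‖y k - x k‖) :
    Filter.Tendsto (fun k => ‖(H (y k) - H (x k)) (y k - xstar)‖ / ‖y k - x k‖)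
      Filter.atTop (nhds 0) := by
  have hHy : Filter.Tendsto (fun k => H (y k)) Filter.atTop (nhds (H xstar)) :=
    hH.tendsto.comp hy
  have hHx : Filter.Tendsto (fun k => H (x k)) Filter.atTop (nhds (H xstar)) :=
    hH.tendsto.comp hx
  have hnorm : Filter.Tendsto (fun k => a * ‖H (y k) - H (x k)‖) Filter.atTop (nhds 0) := by
    have := (hHy.sub hHx).norm
    simpa using (this.const_mul a).congr (fun k => rfl) |>.mono_right (by simp [le_refl])
  refine squeeze_zero (fun k => by positivity) (fun k => ?_) hnorm
  have hk : 0 < ‖y k - x k‖ := by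
    rw [norm_pos_iff, sub_ne_zero]; exact hne k
  rw [div_le_iff₀ hk]
  calc ‖(H (y k) - H (x k)) (y k - xstar)‖
      ≤ ‖H (y k) - H (x k)‖ * ‖y k - xstar‖ := (H (y k) - H (x k)).le_opNorm _
    _ ≤ ‖H (y k) - H (x k)‖ * (a * ‖y k - x k‖) := by
        exact mul_le_mul_of_nonneg_left (hbnd k) (norm_nonneg _)
    _ = a * ‖H (y k) - H (x k)‖ * ‖y k - x k‖ := by ring
end
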